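/- For two orthogonal projections P and Q on a finite-dimensional Hilbert space, P and Q commute if and only if Null(PQP) = Null(P) + Null(Q). -/

import Mathlib

/-!
Since `PQP = (QP)ᴴ(QP)`, the kernel of `PQP` is that of `QP`. If `P` and `Q` commute,
every `v ∈ Null(QP)` splits as `(v - Pv) + Pv ∈ Null(P) + Null(Q)`. Conversely,
`Null(Q) ⊆ Null(QP)` means `QP = QPQ`, and the right-hand side is self-adjoint,
so `QP = (QP)ᴴ = PQ`.
-/

open scoped ComplexOrder

/-- The kernel of a matrix, as a subspace of Euclidean space. -/
noncomputable def mker {n : Type*} [Fintype n] [DecidableEq n] (X : Matrix n n ℂ) :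
    Submodule ℂ (EuclideanSpace ℂ n) :=
  LinearMap.ker (Matrix.toEuclideanLin X)

namespace LinearMap

section Module

variable {R M : Type*} [Ring R] [AddCommGroup M] [Module R M] {p q : Module.End R M}

theorem ker_mul_le_ker_sup_ker (hp : IsIdempotentElem p) : ker (q * p) ≤ ker p ⊔ ker q := by
  intro x hx
  have hx_sub : x - p x ∈ ker p := by
    rw [mem_ker, map_sub, ← Module.End.mul_apply, hp.eq, sub_self]
  simpa using Submodule.add_mem_sup hx_sub (show p x ∈ ker q from hx)

theorem ker_sup_ker_le_ker_mul_of_commute (h : Commute p q) : ker p ⊔ ker q ≤ ker (q * p) :=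
  sup_le (ker_le_ker_comp p q) (h.eq ▸ ker_le_ker_comp q p)

end Module

section InnerProductSpace

variable {𝕜 E : Type*} [RCLike 𝕜] [NormedAddCommGroup E] [InnerProductSpace 𝕜 E]
  {p q : E →ₗ[𝕜] E}

theorem IsSymmetric.commute_of_isSymmetric_mul (hp : p.IsSymmetric) (hq : q.IsSymmetric)
    (hpq : (p * q).IsSymmetric) : Commute p q := by
  ext x
  refine ext_inner_right 𝕜 fun y => ?_
  rw [hpq, Module.End.mul_apply, ← hp, ← hq]
  rfl

theorem IsSymmetric.ker_mul_mul_eq_ker_mul (hp : p.IsSymmetric) (hq : q.IsSymmetricProjection) :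
    ker (p * q * p) = ker (q * p) := by
  refine le_antisymm (fun x hx => ?_) (ker_le_ker_comp (q * p) p)
  rw [mem_ker, ← inner_self_eq_zero (𝕜 := 𝕜)]
  calc inner 𝕜 (q (p x)) (q (p x)) = inner 𝕜 x (p (q (p x))) := by
        rw [hq.isSymmetric, ← Module.End.mul_apply q q, hq.isIdempotentElem.eq, hp]
    _ = 0 := by rw [show p (q (p x)) = 0 from hx, inner_zero_right]

theorem IsSymmetricProjection.commute_of_ker_le_ker_mul (hp : p.IsSymmetric)
    (hq : q.IsSymmetricProjection) (h : ker q ≤ ker (q * p)) : Commute p q := by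
  have hqpq : q * p * q = q * p :=
    (IsIdempotentElem.comp_eq_left_iff hq.isIdempotentElem (q * p)).mpr h
  have hsymm : (q * p * q).IsSymmetric := fun x y => by
    simp only [Module.End.mul_apply]
    rw [hq.isSymmetric, hp, hq.isSymmetric]
  exact (hq.isSymmetric.commute_of_isSymmetric_mul hp (hqpq ▸ hsymm)).symm

theorem IsSymmetricProjection.commute_iff_ker_mul_mul_eq_sup (hp : p.IsSymmetricProjection)
    (hq : q.IsSymmetricProjection) : Commute p q ↔ ker (p * q * p) = ker p ⊔ ker q := by
  rw [hp.isSymmetric.ker_mul_mul_eq_ker_mul hq]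
  refine ⟨fun h => le_antisymm (ker_mul_le_ker_sup_ker hp.isIdempotentElem)
    (ker_sup_ker_le_ker_mul_of_commute h), fun h => ?_⟩
  exact hq.commute_of_ker_le_ker_mul hp.isSymmetric (h ▸ le_sup_right)

end InnerProductSpace

end LinearMap

theorem Matrix.isSymmetricProjection_toEuclideanLin {𝕜 n : Type*} [RCLike 𝕜] [Fintype n]
    [DecidableEq n] {P : Matrix n n 𝕜} (hP : P.IsHermitian) (hPP : IsIdempotentElem P) :
    (toEuclideanLin P).IsSymmetricProjection :=
  ⟨hPP.map (toLpLinAlgEquiv 2), isSymmetric_toEuclideanLin_iff.mpr hP⟩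

/-- Two orthogonal projections P and Q commute iff Null(PQP) = Null(P) + Null(Q). -/
theorem proj_commute_iff_ker_sup
    {n : Type*} [Fintype n] [DecidableEq n]
    (P Q : Matrix n n ℂ)
    (hPherm : P.IsHermitian) (hPidem : P * P = P)
    (hQherm : Q.IsHermitian) (hQidem : Q * Q = Q) :
    P * Q = Q * P ↔ mker (P * Q * P) = mker P ⊔ mker Q := by
  have hP := Matrix.isSymmetricProjection_toEuclideanLin hPherm hPidem
  have hQ := Matrix.isSymmetricProjection_toEuclideanLin hQherm hQidem
  have hmul (A B : Matrix n n ℂ) :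
      Matrix.toEuclideanLin (A * B) = Matrix.toEuclideanLin A * Matrix.toEuclideanLin B :=
    map_mul (Matrix.toLpLinAlgEquiv 2) A B
  rw [mker, mker, mker, hmul, hmul, ← hP.commute_iff_ker_mul_mul_eq_sup hQ]
  exact (commute_map_iff (Matrix.toLpLinAlgEquiv 2).injective).symm
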